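/- Let n ≥ 1, λ ∈ ℝ, and M = ℝⁿ × ℝⁿ × ℝ. Define the operator V_Θ on complex-valued functions on M × M by (V_Θξ)(x,y,r;x',y',r') = exp(−2πi·r'·⟨e^{−λr'}x, y' − e^{λr'}y⟩)·ξ(e^{−λr'}x, e^{λr'}y, r+r'; x'−e^{−λr'}x, y'−e^{λr'}y, r'). Then V_Θ satisfies the pentagon equation: (V_Θ)₁₂ ∘ (V_Θ)₁₃ ∘ (V_Θ)₂₃ = (V_Θ)₂₃ ∘ (V_Θ)₁₂ as operators on complex-valued functions on M × M × M. -/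
import Mathlib


open scoped BigOperators

noncomputable section

/-- `M = ℝⁿ × ℝⁿ × ℝ`, with coordinates `(x,y,r)`. -/
abbrev M (n : ℕ) : Type := (Fin n → ℝ) × (Fin n → ℝ) × ℝ

/-- The operator `V_Θ` on functions on `M × M` (quantization of Case (1)):
`(V_Θξ)(x,y,r;x',y',r') = exp(−2πi·r'·⟨e^{−λr'}x, y'−e^{λr'}y⟩)·
ξ(e^{−λr'}x, e^{λr'}y, r+r'; x'−e^{−λr'}x, y'−e^{λr'}y, r')`. -/
def Vθ (n : ℕ) (lam : ℝ) (ξ : M n × M n → ℂ) : M n × M n → ℂ := fun v =>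
  let x := v.1.1; let y := v.1.2.1; let r := v.1.2.2
  let x' := v.2.1; let y' := v.2.2.1; let r' := v.2.2.2
  Complex.exp (-(2 * Real.pi * Complex.I) * (r' : ℂ)
      * ((∑ i, (Real.exp (-(lam * r')) * x i) * (y' i - Real.exp (lam * r') * y i) : ℝ) : ℂ))
    * ξ ((Real.exp (-(lam * r')) • x, Real.exp (lam * r') • y, r + r'),
         (x' - Real.exp (-(lam * r')) • x, y' - Real.exp (lam * r') • y, r'))

/-- The leg operator `W₁₂` on functions on `M × M × M`. -/
def leg12 {n : ℕ} (W : (M n × M n → ℂ) → (M n × M n → ℂ)) :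
    (M n × M n × M n → ℂ) → (M n × M n × M n → ℂ) := fun ξ p =>
  W (fun q => ξ (q.1, q.2, p.2.2)) (p.1, p.2.1)

/-- The leg operator `W₁₃` on functions on `M × M × M`. -/
def leg13 {n : ℕ} (W : (M n × M n → ℂ) → (M n × M n → ℂ)) :
    (M n × M n × M n → ℂ) → (M n × M n × M n → ℂ) := fun ξ p =>
  W (fun q => ξ (q.1, p.2.1, q.2)) (p.1, p.2.2)

/-- The leg operator `W₂₃` on functions on `M × M × M`. -/
def leg23 {n : ℕ} (W : (M n × M n → ℂ) → (M n × M n → ℂ)) :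
    (M n × M n × M n → ℂ) → (M n × M n × M n → ℂ) := fun ξ p =>
  W (fun q => ξ (p.1, q.1, q.2)) (p.2.1, p.2.2)

/-- `V_Θ` satisfies the pentagon equation
`(V_Θ)₁₂ (V_Θ)₁₃ (V_Θ)₂₃ = (V_Θ)₂₃ (V_Θ)₁₂`. -/
theorem Vθ_pentagon (n : ℕ) (hn : 1 ≤ n) (lam : ℝ) :
    leg12 (Vθ n lam) ∘ leg13 (Vθ n lam) ∘ leg23 (Vθ n lam)
      = leg23 (Vθ n lam) ∘ leg12 (Vθ n lam) := by
  funext ξ p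
  obtain ⟨⟨x1,y1,r1⟩,⟨x2,y2,r2⟩,⟨x3,y3,r3⟩⟩ := p
  simp only [Function.comp, leg12, leg13, leg23, Vθ]
  have e1 : Real.exp (-(lam*(r2+r3))) = Real.exp (-(lam*r3)) * Real.exp (-(lam*r2)) := by
    rw [← Real.exp_add]; ring_nf
  have e2 : Real.exp (lam*(r2+r3)) = Real.exp (lam*r3) * Real.exp (lam*r2) := by
    rw [← Real.exp_add]; ring_nf
  have e3 : Real.exp (-(lam*r3)) * Real.exp (lam*r3) = 1 := by
    rw [← Real.exp_add]; simp
  rw [e1, e2]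
  simp only [← smul_smul, smul_sub, sub_sub_sub_cancel_right, add_assoc,
    Pi.smul_apply, Pi.sub_apply, smul_eq_mul]
  rw [← mul_assoc, ← mul_assoc, ← mul_assoc, ← Complex.exp_add, ← Complex.exp_add,
    ← Complex.exp_add]
  congr 1
  have key : r2 * (∑ i, Real.exp (-(lam*r2)) * x1 i * (y2 i - Real.exp (lam*r2) * y1 i))
      + r3 * (∑ i, Real.exp (-(lam*r3)) * (Real.exp (-(lam*r2)) * x1 i) *
          (y3 i - Real.exp (lam*r3) * (Real.exp (lam*r2) * y1 i)))
      + r3 * (∑ i, Real.exp (-(lam*r3)) * (x2 i - Real.exp (-(lam*r2)) * x1 i) *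
          (y3 i - Real.exp (lam*r3) * (Real.exp (lam*r2) * y1 i) -
            Real.exp (lam*r3) * (y2 i - Real.exp (lam*r2) * y1 i)))
    = r3 * (∑ i, Real.exp (-(lam*r3)) * x2 i * (y3 i - Real.exp (lam*r3) * y2 i))
      + (r2+r3) * (∑ i, Real.exp (-(lam*r3)) * Real.exp (-(lam*r2)) * x1 i *
          (Real.exp (lam*r3) * y2 i - Real.exp (lam*r3) * Real.exp (lam*r2) * y1 i)) := by
    simp only [Finset.mul_sum, ← Finset.sum_add_distrib]
    refine Finset.sum_congr rfl fun i _ => ?_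
    linear_combination (-(r2 * Real.exp (-(lam*r2)) * x1 i * (y2 i - Real.exp (lam*r2) * y1 i))) * e3
  have keyC := congrArg (fun t : ℝ => (t : ℂ)) key
  push_cast at keyC ⊢
  refine congrArg Complex.exp ?_
  linear_combination (-(2*(Real.pi:ℂ)*Complex.I)) * keyC

end
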